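/- Let W ∈ L(H) be a positive operator. The relation ₋*_W≤ on L(H), defined by A ₋*_W≤ B iff range B = range A + range(B − A), range A ∩ range(B − A) = {0}, and range(B − A) ⊆ ker(A*W), is a partial order: it is reflexive, antisymmetric and transitive. -/

import Mathlib

open ContinuousLinearMap
open scoped ComplexInnerProductSpace

noncomputable section

variable {H : Type*} [NormedAddCommGroup H] [InnerProductSpace ℂ H] [CompleteSpace H]

/-- `M(W,S)`: the set of operators `X` with `0 ≤ X ≤ W` (Loewner order) and `range X ⊆ S^⊥`. -/
def MSet (W : H →L[ℂ] H) (S : Submodule ℂ H) : Set (H →L[ℂ] H) :=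
  {X | X.IsPositive ∧ (W - X).IsPositive ∧ LinearMap.range (X : H →ₗ[ℂ] H) ≤ Sᗮ}

/-- `T` is the shorted operator of `W` to `S`, i.e. the maximum of `M(W,S)` in the Loewner
order. -/
def IsShorted (W : H →L[ℂ] H) (S : Submodule ℂ H) (T : H →L[ℂ] H) : Prop :=
  T ∈ MSet W S ∧ ∀ X ∈ MSet W S, (T - X).IsPositive

/-- The minus order: `A ⁻≤ B` iff there are bounded idempotents `P, Q` with `A = PB` and
`A* = QB*`. -/
def MinusLE (A B : H →L[ℂ] H) : Prop :=
  ∃ P Q : H →L[ℂ] H, IsIdempotentElem P ∧ IsIdempotentElem Q ∧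
    A = P ∘L B ∧ adjoint A = Q ∘L adjoint B

/-- The pair `(W, N)` is compatible: there is a bounded idempotent `Q` with range `N` such that
`WQ` is selfadjoint. -/
def Compatible (W : H →L[ℂ] H) (N : Submodule ℂ H) : Prop :=
  ∃ Q : H →L[ℂ] H, IsIdempotentElem Q ∧ LinearMap.range (Q : H →ₗ[ℂ] H) = N ∧ IsSelfAdjoint (W ∘L Q)

/-- `M⁻(W,S)`: operators `X` with `X ⁻≤ W`, `range X ⊆ S^⊥` and `range X* ⊆ S^⊥`. -/
def MMinusSet (W : H →L[ℂ] H) (S : Submodule ℂ H) : Set (H →L[ℂ] H) :=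
  {X | MinusLE X W ∧ LinearMap.range (X : H →ₗ[ℂ] H) ≤ Sᗮ ∧ LinearMap.range (adjoint X : H →ₗ[ℂ] H) ≤ Sᗮ}

/-- `X₀` is a `W`-inverse of `M` in `R(C)`: for every `x`, `X₀ x` is a `W`-weighted least squares
solution of `M z = C x`. -/
def WInverseIn (W M C X₀ : H →L[ℂ] H) : Prop :=
  ∀ x z : H, (⟪W (M (X₀ x) - C x), M (X₀ x) - C x⟫).re ≤ (⟪W (M z - C x), M z - C x⟫).re

/-- The left weighted star order `A ₋*_W≤ B`. -/
def LStarW (W A B : H →L[ℂ] H) : Prop :=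
  LinearMap.range (B : H →ₗ[ℂ] H) = LinearMap.range (A : H →ₗ[ℂ] H) ⊔ LinearMap.range ((B - A : H →L[ℂ] H) : H →ₗ[ℂ] H) ∧
  LinearMap.range (A : H →ₗ[ℂ] H) ⊓ LinearMap.range ((B - A : H →L[ℂ] H) : H →ₗ[ℂ] H) = ⊥ ∧
  LinearMap.range ((B - A : H →L[ℂ] H) : H →ₗ[ℂ] H) ≤ LinearMap.ker (adjoint A ∘L W : H →ₗ[ℂ] H)

/-- The right weighted star order `A ≤*_W B`. -/
def RStarW (W A B : H →L[ℂ] H) : Prop :=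
  LinearMap.range (adjoint B : H →ₗ[ℂ] H) =
    LinearMap.range (adjoint A : H →ₗ[ℂ] H) ⊔ LinearMap.range ((adjoint B - adjoint A : H →L[ℂ] H) : H →ₗ[ℂ] H) ∧
  LinearMap.range (adjoint A : H →ₗ[ℂ] H) ⊓ LinearMap.range ((adjoint B - adjoint A : H →L[ℂ] H) : H →ₗ[ℂ] H) = ⊥ ∧
  LinearMap.range ((adjoint B - adjoint A : H →L[ℂ] H) : H →ₗ[ℂ] H) ≤ LinearMap.ker (A ∘L W : H →ₗ[ℂ] H)

/-- The weighted star order `A *_W≤ B`. -/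
def StarW (W A B : H →L[ℂ] H) : Prop :=
  LStarW W A B ∧ RStarW W A B

/- The first condition of `A ₋*_W≤ B` only says `range A ⊆ range B`, since
`range (B - A) ⊆ range A + range B` always holds; with the second condition this makes
`range B` the direct sum of `range A` and `range (B - A)`, which forces antisymmetry and
transports along chains. The third condition passes along a chain because
`range A ⊆ range B` gives `ker B* = (range B)ᗮ ⊆ (range A)ᗮ = ker A*`. -/

namespace LinearMap

variable {R M N : Type*} [Ring R] [AddCommGroup M] [AddCommGroup N] [Module R M] [Module R N]

theorem range_le_sup_range_sub (f g : M →ₗ[R] N) : range g ≤ range f ⊔ range (g - f) := by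
  simpa using range_add_le f (g - f)

theorem range_sub_le_sup (f g : M →ₗ[R] N) : range (g - f) ≤ range g ⊔ range f := by
  simpa [sub_eq_add_neg] using range_add_le g (-f)

theorem range_eq_sup_range_sub_iff {f g : M →ₗ[R] N} :
    range g = range f ⊔ range (g - f) ↔ range f ≤ range g :=
  ⟨fun h ↦ h ▸ le_sup_left, fun h ↦ (range_le_sup_range_sub f g).antisymm
    (sup_le h ((range_sub_le_sup f g).trans (sup_le le_rfl h)))⟩

theorem disjoint_range_sub_trans {f g h : M →ₗ[R] N} (hfg : range f ≤ range g)
    (hfg' : Disjoint (range f) (range (g - f))) (hgh : Disjoint (range g) (range (h - g))) :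
    Disjoint (range f) (range (h - f)) := by
  rw [disjoint_iff_inf_le]
  rintro _ ⟨hx, z, rfl⟩
  -- `(h - f) z = (g - f) z + (h - g) z`, and the last summand lies in `range g ⊓ range (h - g)`.
  have hgz : (h - g) z = 0 := by
    refine Submodule.disjoint_def.mp hgh _ ?_ ⟨z, rfl⟩
    have : (h - g) z = (h - f) z - (g - f) z := by simp
    exact this ▸ sub_mem (hfg hx) ((range_sub_le_sup f g).trans (sup_le le_rfl hfg) ⟨z, rfl⟩)
  have : (h - f) z = (g - f) z := by
    rw [← sub_eq_zero, ← hgz]; simp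
  exact this ▸ Submodule.disjoint_def.mp hfg' _ (this ▸ hx) ⟨z, rfl⟩

end LinearMap

namespace ContinuousLinearMap

variable {𝕜 E F : Type*} [RCLike 𝕜] [NormedAddCommGroup E] [InnerProductSpace 𝕜 E] [CompleteSpace E]
  [NormedAddCommGroup F] [InnerProductSpace 𝕜 F] [CompleteSpace F]

theorem ker_adjoint_le_of_range_le {A B : E →L[𝕜] F} (h : A.range ≤ B.range) :
    (adjoint B).ker ≤ (adjoint A).ker := by
  rw [← orthogonal_range, ← orthogonal_range]
  exact Submodule.orthogonal_le h

end ContinuousLinearMap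

namespace LStarW

variable {W A B C : H →L[ℂ] H}

theorem range_le (h : LStarW W A B) : A.range ≤ B.range :=
  h.1 ▸ le_sup_left

theorem refl (W A : H →L[ℂ] H) : LStarW W A A := by
  simp [LStarW]

theorem antisymm (hAB : LStarW W A B) (hBA : LStarW W B A) : A = B := by
  have hBA_le : (B - A).range ≤ A.range := by
    rw [← LinearMap.range_neg, ← toLinearMap_neg, neg_sub]
    exact hBA.1 ▸ le_sup_right
  have hbot : (B - A).range = ⊥ := le_bot_iff.mp (hAB.2.1 ▸ le_inf hBA_le le_rfl)
  rw [LinearMap.range_eq_bot, toLinearMap_sub, sub_eq_zero, coe_inj] at hbot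
  exact hbot.symm

theorem trans (hAB : LStarW W A B) (hBC : LStarW W B C) : LStarW W A C := by
  have hAC : A.range ≤ C.range := hAB.range_le.trans hBC.range_le
  refine ⟨?_, ?_, ?_⟩
  · simpa using LinearMap.range_eq_sup_range_sub_iff.mpr hAC
  · have := LinearMap.disjoint_range_sub_trans hAB.range_le (disjoint_iff.mpr hAB.2.1)
      (disjoint_iff.mpr hBC.2.1)
    simpa [disjoint_iff] using this
  · have hsum : C - A = (B - A) + (C - B) := by abel
    rw [hsum]
    refine (LinearMap.range_add_le _ _).trans (sup_le hAB.2.2 (hBC.2.2.trans ?_))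
    simp only [toLinearMap_comp, LinearMap.ker_comp]
    exact Submodule.comap_mono (ker_adjoint_le_of_range_le hAB.range_le)

end LStarW

theorem stmt13_general (W : H →L[ℂ] H) :
    (∀ A : H →L[ℂ] H, LStarW W A A) ∧
      (∀ A B : H →L[ℂ] H, LStarW W A B → LStarW W B A → A = B) ∧
      (∀ A B C : H →L[ℂ] H, LStarW W A B → LStarW W B C → LStarW W A C) :=
  ⟨LStarW.refl W, fun _ _ ↦ LStarW.antisymm, fun _ _ _ ↦ LStarW.trans⟩

/-- the left weighted star order `₋*_W≤` is a partial order on `L(H)`: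
reflexive, antisymmetric and transitive. -/
theorem stmt13 (W : H →L[ℂ] H) (hW : W.IsPositive) :
    (∀ A : H →L[ℂ] H, LStarW W A A) ∧
      (∀ A B : H →L[ℂ] H, LStarW W A B → LStarW W B A → A = B) ∧
      (∀ A B C : H →L[ℂ] H, LStarW W A B → LStarW W B C → LStarW W A C) :=
  stmt13_general W
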